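/- arXiv:2212.13587 — 3 statements merged into one kernel-verified Lean document; each statement's English description precedes it below -/
import Mathlib

section
/- Let (Ω, 𝓕, P) be a probability space, let 𝒢₁, …, 𝒢ₙ be sub-σ-algebras of 𝓕, let S₁, …, Sₙ : Ω → ℝ^d be random vectors with E[‖Sᵢ‖²] < ∞, and let F₁, …, Fₙ : Ω → ℝ be random variables with E[Fᵢ² ‖Sᵢ‖²] < ∞ for all i. Assume the cross-term orthogonality conditions: for all i ≠ j and every bounded 𝒢ᵢ-measurable random variable β : Ω → ℝ, E[β ⟨Sᵢ, Sⱼ⟩ | 𝒢ⱼ] = 0 almost surely. Assume also that E[‖Sᵢ‖² | 𝒢ᵢ] > 0 almost surely for each i. Define ĝ_sf := ∑ᵢ Fᵢ Sᵢ and, for each i, the baseline βᵢ* := E[⟨ĝ_sf, Sᵢ⟩ | 𝒢ᵢ] / E[‖Sᵢ‖² | 𝒢ᵢ]. Then for any random variables b₁, …, bₙ : Ω → ℝ with each bᵢ being 𝒢ᵢ-measurable and E[bᵢ² ‖Sᵢ‖²] < ∞, one has E[‖∑ᵢ (Fᵢ − bᵢ) Sᵢ‖²] ≥ E[‖∑ᵢ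 (Fᵢ − βᵢ*) Sᵢ‖²]. That is, βᵢ* are the baselines minimizing the second moment of the baselined gradient estimator. -/
open MeasureTheory Filter
open scoped RealInnerProductSpace

/-!
Write `β i` for the optimal baselines and `R = ĝ_sf - ∑ i, β i • S i`. For any other baselines `b`
the estimator is `R + D` with `D = ∑ i, (β i - b i) • S i`, so it suffices that `R` is orthogonal in
`L²(μ)` to every `δ • S i` with `δ` a `𝒢 i`-measurable coefficient: then
`E‖R + D‖² = E‖R‖² + E‖D‖²`. Against `δ • S i`, the part `ĝ_sf - β i • S i` is orthogonal because
`β i • S i` is the projection of `ĝ_sf` onto the `𝒢 i`-measurable multiples of `S i` (pull-out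
property), and each `β j • S j` with `j ≠ i` is orthogonal by the cross-term condition, extended
from bounded to square-integrable coefficients by truncation. That `β i • S i` is square-integrable
at all comes from the conditional Cauchy–Schwarz inequality
`E[⟪g, S⟫ | 𝒢]² ≤ E[‖g‖² | 𝒢] E[‖S‖² | 𝒢]`.
-/

theorem discrim_le_zero_of_forall_rat {a b c : ℝ} (h : ∀ q : ℚ, 0 ≤ a * (q * q) + b * q + c) :
    discrim a b c ≤ 0 :=
  discrim_le_zero fun x =>
    Rat.denseRange_cast.induction_on x (isClosed_le continuous_const (by fun_prop)) h

namespace MeasureTheory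

variable {Ω E : Type*} [NormedAddCommGroup E] [InnerProductSpace ℝ E]

section Lp

variable {m0 : MeasurableSpace Ω} {μ : Measure Ω}

theorem MemLp.integrable_inner {u v : Ω → E} (hu : MemLp u 2 μ) (hv : MemLp v 2 μ) :
    Integrable (fun ω => ⟪u ω, v ω⟫) μ :=
  (hu.norm.integrable_mul hv.norm).mono (hu.1.inner hv.1) (ae_of_all _ fun ω => by
    simpa using abs_real_inner_le_norm (u ω) (v ω))

theorem memLp_two_smul_iff {c : Ω → ℝ} {S : Ω → E} (hc : AEStronglyMeasurable c μ)
    (hS : AEStronglyMeasurable S μ) :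
    MemLp (fun ω => c ω • S ω) 2 μ ↔ Integrable (fun ω => c ω ^ 2 * ‖S ω‖ ^ 2) μ := by
  rw [memLp_two_iff_integrable_sq_norm (by exact hc.smul hS)]
  simp only [norm_smul, mul_pow, Real.norm_eq_abs, sq_abs]

theorem MemLp.smul_of_abs_le {S : Ω → E} (hS : MemLp S 2 μ) {c : Ω → ℝ}
    (hc : AEStronglyMeasurable c μ) {C : ℝ} (hC : ∀ ω, |c ω| ≤ C) :
    MemLp (fun ω => c ω • S ω) 2 μ :=
  hS.of_le_mul (hc.smul hS.1) (ae_of_all _ fun ω => by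
    rw [norm_smul, Real.norm_eq_abs]
    exact mul_le_mul_of_nonneg_right (hC ω) (norm_nonneg _))

theorem integral_norm_sq_le_integral_norm_add_sq {R D : Ω → E} (hR : MemLp R 2 μ)
    (hD : MemLp D 2 μ) (hRD : ∫ ω, ⟪R ω, D ω⟫ ∂μ = 0) :
    ∫ ω, ‖R ω‖ ^ 2 ∂μ ≤ ∫ ω, ‖R ω + D ω‖ ^ 2 ∂μ := by
  have hR2 := (memLp_two_iff_integrable_sq_norm hR.1).1 hR
  have hD2 := (memLp_two_iff_integrable_sq_norm hD.1).1 hD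
  have hinner := (hR.integrable_inner hD).const_mul 2
  simp_rw [norm_add_sq_real]
  rw [integral_add (f := fun ω => ‖R ω‖ ^ 2 + 2 * ⟪R ω, D ω⟫) (hR2.add hinner) hD2,
    integral_add hR2 hinner, integral_const_mul, hRD]
  linarith [integral_nonneg (μ := μ) (f := fun ω => ‖D ω‖ ^ 2) fun ω => sq_nonneg _]

end Lp

section CondExp

variable {m m0 : MeasurableSpace Ω} {μ : Measure Ω}

theorem integral_mul_condExp (hm : m ≤ m0) [SigmaFinite (μ.trim hm)] {h f : Ω → ℝ}
    (hh : StronglyMeasurable[m] h) (hf : Integrable f μ)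
    (hhf : Integrable (fun ω => h ω * f ω) μ) :
    ∫ ω, h ω * f ω ∂μ = ∫ ω, h ω * μ[f|m] ω ∂μ := by
  rw [← integral_condExp hm]
  exact integral_congr_ae (condExp_mul_of_stronglyMeasurable_left hh hhf hf)

theorem integrable_mul_of_integrable_mul_condExp (hm : m ≤ m0) [SigmaFinite (μ.trim hm)]
    {h f : Ω → ℝ} (hh : Measurable[m] h) (h0 : 0 ≤ h) (hf : Integrable f μ) (hf0 : 0 ≤ᵐ[μ] f)
    (hhf : Integrable (fun ω => h ω * μ[f|m] ω) μ) :
    Integrable (fun ω => h ω * f ω) μ := by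
  set trunc : ℕ → Ω → ℝ := fun M ω => min (h ω) M
  have trunc_meas (M : ℕ) : Measurable[m] (trunc M) := hh.min measurable_const
  have trunc_bound (M : ℕ) : ∀ᵐ ω ∂μ, ‖trunc M ω‖ ≤ M := ae_of_all _ fun ω => by
    rw [Real.norm_eq_abs, abs_of_nonneg (le_min (h0 ω) M.cast_nonneg)]
    exact min_le_right _ _
  have trunc_int (M : ℕ) : Integrable (fun ω => trunc M ω * f ω) μ :=
    hf.bdd_mul ((trunc_meas M).mono hm le_rfl).aestronglyMeasurable (trunc_bound M)
  have trunc_le (M : ℕ) : ∫ ω, trunc M ω * f ω ∂μ ≤ ∫ ω, h ω * μ[f|m] ω ∂μ := by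
    rw [integral_mul_condExp hm (trunc_meas M).stronglyMeasurable hf (trunc_int M)]
    refine integral_mono_ae (integrable_condExp.bdd_mul
      ((trunc_meas M).mono hm le_rfl).aestronglyMeasurable (trunc_bound M)) hhf ?_
    filter_upwards [condExp_nonneg hf0] with ω hω
    exact mul_le_mul_of_nonneg_right (min_le_left _ _) hω
  have hnonneg : 0 ≤ᵐ[μ] fun ω => h ω * f ω := by
    filter_upwards [hf0] with ω hω using mul_nonneg (h0 ω) hω
  have hmct := lintegral_tendsto_of_tendsto_of_monotone
    (f := fun M ω => ENNReal.ofReal (trunc M ω * f ω)) (F := fun ω => ENNReal.ofReal (h ω * f ω))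
    (fun M => (trunc_int M).aemeasurable.ennreal_ofReal)
    (by
      filter_upwards [hf0] with ω hω M M' hMM'
      exact ENNReal.ofReal_le_ofReal (mul_le_mul_of_nonneg_right
        (min_le_min le_rfl (Nat.cast_le.2 hMM')) hω))
    (ae_of_all _ fun ω => tendsto_const_nhds.congr' <| by
      filter_upwards [eventually_ge_atTop ⌈h ω⌉₊] with M hM
      simp only [trunc, min_eq_left ((Nat.le_ceil _).trans (Nat.cast_le.2 hM))])
  refine ⟨(hh.mono hm le_rfl).aestronglyMeasurable.mul hf.1,
    (hasFiniteIntegral_iff_ofReal hnonneg).2 ?_⟩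
  refine (le_of_tendsto' hmct fun M => ?_).trans_lt
    (ENNReal.ofReal_lt_top (r := ∫ ω, h ω * μ[f|m] ω ∂μ))
  rw [← ofReal_integral_eq_lintegral_ofReal (trunc_int M)
    (by filter_upwards [hf0] with ω hω using mul_nonneg (le_min (h0 ω) M.cast_nonneg) hω)]
  exact ENNReal.ofReal_le_ofReal (trunc_le M)

theorem integral_mul_eq_zero_of_forall_bounded (hm : m ≤ m0) {c X : Ω → ℝ}
    (hc : Measurable[m] c) (hcX : Integrable (fun ω => c ω * X ω) μ)
    (h : ∀ β : Ω → ℝ, Measurable[m] β → (∃ C : ℝ, ∀ ω, |β ω| ≤ C) →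
      ∫ ω, β ω * X ω ∂μ = 0) :
    ∫ ω, c ω * X ω ∂μ = 0 := by
  set A : ℕ → Set Ω := fun M => {ω | |c ω| ≤ M}
  have hA (M : ℕ) : MeasurableSet[m] (A M) :=
    (continuous_abs.measurable.comp hc) measurableSet_Iic
  have hzero (M : ℕ) : ∫ ω in A M, c ω * X ω ∂μ = 0 := by
    rw [← integral_indicator (hm _ (hA M))]
    refine Eq.trans ?_ (h ((A M).indicator c) (hc.indicator (hA M)) ⟨M, fun ω => ?_⟩)
    · simp only [Set.indicator_mul_left]
    · by_cases hω : ω ∈ A M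
      · rw [Set.indicator_of_mem hω]
        exact hω
      · simp [hω]
  have hunion : ⋃ M, A M = Set.univ :=
    Set.eq_univ_of_forall fun ω => Set.mem_iUnion.2 ⟨⌈|c ω|⌉₊, Nat.le_ceil (|c ω|)⟩
  have hlim := tendsto_setIntegral_of_monotone (fun M => hm _ (hA M))
    (fun M M' hMM' ω (hω : |c ω| ≤ M) => hω.trans (Nat.cast_le.2 hMM')) hcX.integrableOn
  rw [hunion, setIntegral_univ] at hlim
  simp only [hzero] at hlim
  exact tendsto_nhds_unique hlim tendsto_const_nhds

theorem condExp_inner_sq_le_mul {g S : Ω → E} (hg : MemLp g 2 μ) (hS : MemLp S 2 μ) :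
    ∀ᵐ ω ∂μ, μ[fun ω' => ⟪g ω', S ω'⟫|m] ω ^ 2 ≤
      μ[fun ω' => ‖g ω'‖ ^ 2|m] ω * μ[fun ω' => ‖S ω'‖ ^ 2|m] ω := by
  have hg2 := (memLp_two_iff_integrable_sq_norm hg.1).1 hg
  have hS2 := (memLp_two_iff_integrable_sq_norm hS.1).1 hS
  have hgS := hg.integrable_inner hS
  -- countably many `q`, so that the exceptional null sets can be merged
  have hquad (q : ℚ) : ∀ᵐ ω ∂μ, 0 ≤ μ[fun ω' => ‖g ω'‖ ^ 2|m] ω * (q * q) +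
      -(2 * μ[fun ω' => ⟪g ω', S ω'⟫|m] ω) * q + μ[fun ω' => ‖S ω'‖ ^ 2|m] ω := by
    have hexp : (fun ω => ‖(q : ℝ) • g ω - S ω‖ ^ 2) = ((q * q : ℝ) • fun ω => ‖g ω‖ ^ 2) -
        ((2 * q : ℝ) • fun ω => ⟪g ω, S ω⟫) + fun ω => ‖S ω‖ ^ 2 := by
      ext ω
      simp only [norm_sub_sq_real, norm_smul, real_inner_smul_left, mul_pow, Real.norm_eq_abs,
        sq_abs, Pi.add_apply, Pi.sub_apply, Pi.smul_apply, smul_eq_mul]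
      ring
    have hnonneg := condExp_nonneg (m := m) (μ := μ)
      (f := fun ω => ‖(q : ℝ) • g ω - S ω‖ ^ 2) (ae_of_all _ fun _ => sq_nonneg _)
    rw [hexp] at hnonneg
    filter_upwards [hnonneg,
      condExp_add ((hg2.smul (q * q : ℝ)).sub (hgS.smul (2 * q : ℝ))) hS2 m,
      condExp_sub (hg2.smul (q * q : ℝ)) (hgS.smul (2 * q : ℝ)) m,
      condExp_smul (μ := μ) (q * q : ℝ) (fun ω => ‖g ω‖ ^ 2) m,
      condExp_smul (μ := μ) (2 * q : ℝ) (fun ω => ⟪g ω, S ω⟫) m] with ω h0 hadd hsub hA hN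
    simp only [hadd, Pi.add_apply, hsub, Pi.sub_apply, hA, hN, Pi.smul_apply, smul_eq_mul,
      Pi.zero_apply] at h0
    linarith
  filter_upwards [ae_all_iff.2 hquad] with ω hω
  have := discrim_le_zero_of_forall_rat hω
  rw [discrim] at this
  linarith

theorem integral_inner_smul_smul_eq_zero {mi mj : MeasurableSpace Ω} (hmi : mi ≤ m0)
    (hmj : mj ≤ m0) [SigmaFinite (μ.trim hmj)] {Si Sj : Ω → E} (hSi : MemLp Si 2 μ)
    (hSj : MemLp Sj 2 μ)
    {c e : Ω → ℝ} (hc : Measurable[mi] c) (he : Measurable[mj] e)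
    (hcS : MemLp (fun ω => c ω • Si ω) 2 μ) (heS : MemLp (fun ω => e ω • Sj ω) 2 μ)
    (horth : ∀ β : Ω → ℝ, Measurable[mi] β → (∃ C : ℝ, ∀ ω, |β ω| ≤ C) →
      μ[fun ω => β ω * ⟪Si ω, Sj ω⟫|mj] =ᵐ[μ] 0) :
    ∫ ω, ⟪c ω • Si ω, e ω • Sj ω⟫ ∂μ = 0 := by
  have hceS := hcS.integrable_inner heS
  simp only [real_inner_smul_left] at hceS ⊢
  simp only [real_inner_smul_right] at hceS ⊢
  refine integral_mul_eq_zero_of_forall_bounded hmi hc hceS fun β hβ ⟨C, hC⟩ => ?_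
  have hβS := hSi.smul_of_abs_le (hβ.mono hmi le_rfl).aestronglyMeasurable hC
  have hβSj := hβS.integrable_inner hSj
  have hβeS := hβS.integrable_inner heS
  simp only [real_inner_smul_left] at hβSj hβeS
  simp only [real_inner_smul_right] at hβeS
  calc ∫ ω, β ω * (e ω * ⟪Si ω, Sj ω⟫) ∂μ = ∫ ω, e ω * (β ω * ⟪Si ω, Sj ω⟫) ∂μ := by
        simp only [mul_left_comm]
    _ = ∫ ω, e ω * μ[fun ω => β ω * ⟪Si ω, Sj ω⟫|mj] ω ∂μ :=
        integral_mul_condExp hmj he.stronglyMeasurable hβSj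
          (by simpa only [mul_left_comm] using hβeS)
    _ = 0 := integral_eq_zero_of_ae <| by
        filter_upwards [horth β hβ ⟨C, hC⟩] with ω hω
        simp [hω]

end CondExp

end MeasureTheory

section OptimalBaseline

variable {Ω E : Type*} [NormedAddCommGroup E] [InnerProductSpace ℝ E]
  {m m0 : MeasurableSpace Ω} {μ : Measure Ω}

noncomputable def optimalBaseline (μ : Measure Ω) (m : MeasurableSpace Ω) (g S : Ω → E)
    (ω : Ω) : ℝ :=
  μ[fun ω' => ⟪g ω', S ω'⟫|m] ω / μ[fun ω' => ‖S ω'‖ ^ 2|m] ω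

theorem measurable_optimalBaseline {g S : Ω → E} : Measurable[m] (optimalBaseline μ m g S) :=
  stronglyMeasurable_condExp.measurable.div stronglyMeasurable_condExp.measurable

theorem memLp_optimalBaseline_smul (hm : m ≤ m0) [SigmaFinite (μ.trim hm)] {g S : Ω → E}
    (hg : MemLp g 2 μ) (hS : MemLp S 2 μ)
    (hpos : ∀ᵐ ω ∂μ, 0 < μ[fun ω' => ‖S ω'‖ ^ 2|m] ω) :
    MemLp (fun ω => optimalBaseline μ m g S ω • S ω) 2 μ := by
  have hβ := (measurable_optimalBaseline (μ := μ) (g := g) (S := S)).mono hm le_rfl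
  rw [memLp_two_smul_iff hβ.aestronglyMeasurable hS.1]
  refine integrable_mul_of_integrable_mul_condExp hm (measurable_optimalBaseline.pow_const 2)
    (fun ω => sq_nonneg _) ((memLp_two_iff_integrable_sq_norm hS.1).1 hS)
    (ae_of_all _ fun ω => sq_nonneg _) ?_
  refine (integrable_condExp (m := m) (f := fun ω => ‖g ω‖ ^ 2)).mono'
    ((hβ.pow_const 2).aestronglyMeasurable.mul integrable_condExp.1) ?_
  filter_upwards [condExp_inner_sq_le_mul (m := m) hg hS, hpos] with ω hcs hK
  rw [Real.norm_eq_abs, abs_of_nonneg (by positivity), optimalBaseline, div_pow,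
    div_mul_eq_mul_div, div_le_iff₀ (by positivity)]
  nlinarith

theorem integral_inner_smul_eq_integral_inner_optimalBaseline_smul (hm : m ≤ m0)
    [SigmaFinite (μ.trim hm)] {g S : Ω → E} (hg : MemLp g 2 μ) (hS : MemLp S 2 μ)
    (hpos : ∀ᵐ ω ∂μ, 0 < μ[fun ω' => ‖S ω'‖ ^ 2|m] ω) {c : Ω → ℝ} (hc : Measurable[m] c)
    (hcS : MemLp (fun ω => c ω • S ω) 2 μ) :
    ∫ ω, ⟪g ω, c ω • S ω⟫ ∂μ = ∫ ω, ⟪optimalBaseline μ m g S ω • S ω, c ω • S ω⟫ ∂μ := by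
  set β := optimalBaseline μ m g S
  have hβS : MemLp (fun ω => β ω • S ω) 2 μ := memLp_optimalBaseline_smul hm hg hS hpos
  have hS2 := (memLp_two_iff_integrable_sq_norm hS.1).1 hS
  have hgcS := hg.integrable_inner hcS
  have hβcS := hβS.integrable_inner hcS
  simp only [real_inner_smul_left, real_inner_smul_right, real_inner_self_eq_norm_sq] at hgcS hβcS ⊢
  calc ∫ ω, c ω * ⟪g ω, S ω⟫ ∂μ = ∫ ω, c ω * μ[fun ω' => ⟪g ω', S ω'⟫|m] ω ∂μ :=
        integral_mul_condExp hm hc.stronglyMeasurable (hg.integrable_inner hS) hgcS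
    _ = ∫ ω, c ω * β ω * μ[fun ω' => ‖S ω'‖ ^ 2|m] ω ∂μ := by
        refine integral_congr_ae ?_
        filter_upwards [hpos] with ω hω
        simp only [β, optimalBaseline]
        field_simp
    _ = ∫ ω, c ω * β ω * ‖S ω‖ ^ 2 ∂μ := by
        refine (integral_mul_condExp (h := fun ω => c ω * β ω) hm
          (hc.mul measurable_optimalBaseline).stronglyMeasurable hS2 ?_).symm
        simpa only [mul_assoc] using hβcS
    _ = ∫ ω, c ω * (β ω * ‖S ω‖ ^ 2) ∂μ := by simp only [mul_assoc]

theorem integral_inner_sub_sum_optimalBaseline_smul_eq_zero {ι : Type*} [Fintype ι]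
    [IsFiniteMeasure μ] {𝒢 : ι → MeasurableSpace Ω} (h𝒢 : ∀ i, 𝒢 i ≤ m0) {S : ι → Ω → E}
    (hS : ∀ i, MemLp (S i) 2 μ) {g : Ω → E} (hg : MemLp g 2 μ)
    (horth : ∀ i j, i ≠ j → ∀ β : Ω → ℝ, Measurable[𝒢 i] β → (∃ C : ℝ, ∀ ω, |β ω| ≤ C) →
      μ[fun ω => β ω * ⟪S i ω, S j ω⟫|𝒢 j] =ᵐ[μ] 0)
    (hpos : ∀ i, ∀ᵐ ω ∂μ, 0 < μ[fun ω' => ‖S i ω'‖ ^ 2|𝒢 i] ω)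
    {δ : ι → Ω → ℝ} (hδ : ∀ i, Measurable[𝒢 i] (δ i))
    (hδS : ∀ i, MemLp (fun ω => δ i ω • S i ω) 2 μ) :
    ∫ ω, ⟪g ω - ∑ j, optimalBaseline μ (𝒢 j) g (S j) ω • S j ω, ∑ i, δ i ω • S i ω⟫ ∂μ = 0 := by
  classical
  set β := fun j => optimalBaseline μ (𝒢 j) g (S j)
  have hβS (j : ι) : MemLp (fun ω => β j ω • S j ω) 2 μ :=
    memLp_optimalBaseline_smul (h𝒢 j) hg (hS j) (hpos j)
  have hR : MemLp (fun ω => g ω - ∑ j, β j ω • S j ω) 2 μ :=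
    hg.sub (memLp_finsetSum _ fun j _ => hβS j)
  have hterm (i : ι) : ∫ ω, ⟪g ω - ∑ j, β j ω • S j ω, δ i ω • S i ω⟫ ∂μ = 0 := by
    have hcross (j : ι) (hji : j ≠ i) : ∫ ω, ⟪β j ω • S j ω, δ i ω • S i ω⟫ ∂μ = 0 := by
      refine (integral_congr_ae (ae_of_all _ fun ω => real_inner_comm _ _)).trans ?_
      exact integral_inner_smul_smul_eq_zero (h𝒢 i) (h𝒢 j) (hS i) (hS j) (hδ i)
        measurable_optimalBaseline (hδS i) (hβS j) (horth i j hji.symm)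
    simp_rw [inner_sub_left, sum_inner]
    rw [integral_sub (hg.integrable_inner (hδS i))
        (integrable_finsetSum _ fun j _ => (hβS j).integrable_inner (hδS i)),
      integral_finsetSum _ fun j _ => (hβS j).integrable_inner (hδS i),
      Finset.sum_eq_single i (fun j _ hji => hcross j hji) (by simp),
      integral_inner_smul_eq_integral_inner_optimalBaseline_smul (h𝒢 i) hg (hS i) (hpos i)
        (hδ i) (hδS i), sub_self]
  simp_rw [inner_sum]
  rw [integral_finsetSum _ fun i _ => hR.integrable_inner (hδS i)]
  exact Finset.sum_eq_zero fun i _ => hterm i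

end OptimalBaseline

/-- Theorem 1 of the paper (optimal state-dependent baselines), abstract form.
Given score vectors `S i` with sub-σ-algebras `𝒢 i`, coefficients `F i`, the
cross-term orthogonality conditions, and a.s. positive conditional second
moments, the baselines `βᵢ* = E[⟪ĝ_sf, Sᵢ⟫ | 𝒢ᵢ] / E[‖Sᵢ‖² | 𝒢ᵢ]` (with
`ĝ_sf = ∑ᵢ Fᵢ Sᵢ`) minimize the second moment of the baselined estimator
over all choices of 𝒢ᵢ-measurable baselines `bᵢ`. -/
theorem optimal_baselines_minimize_second_moment
    {Ω : Type*} [m0 : MeasurableSpace Ω] (μ : Measure Ω) [IsProbabilityMeasure μ]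
    (n : ℕ) (𝒢 : Fin n → MeasurableSpace Ω) (h𝒢 : ∀ i, 𝒢 i ≤ m0)
    {d : ℕ} (S : Fin n → Ω → EuclideanSpace ℝ (Fin d))
    (hS : ∀ i, MemLp (S i) 2 μ)
    (F : Fin n → Ω → ℝ) (hFmeas : ∀ i, Measurable (F i))
    (hF : ∀ i, Integrable (fun ω => (F i ω) ^ 2 * ‖S i ω‖ ^ 2) μ)
    -- cross-term orthogonality: for `i ≠ j` and any bounded `𝒢 i`-measurable β,
    -- `E[β ⟪Sᵢ, Sⱼ⟫ | 𝒢 j] = 0` a.s.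
    (horth : ∀ i j, i ≠ j → ∀ β : Ω → ℝ, Measurable[𝒢 i] β →
      (∃ C : ℝ, ∀ ω, |β ω| ≤ C) →
      μ[fun ω => β ω * ⟪S i ω, S j ω⟫ | 𝒢 j] =ᵐ[μ] 0)
    (hpos : ∀ i, ∀ᵐ ω ∂μ, 0 < (μ[fun ω' => ‖S i ω'‖ ^ 2 | 𝒢 i]) ω)
    (gsf : Ω → EuclideanSpace ℝ (Fin d)) (hgsf : gsf = fun ω => ∑ i, F i ω • S i ω)
    (βstar : Fin n → Ω → ℝ)
    (hβstar : ∀ i, βstar i = fun ω =>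
      (μ[fun ω' => ⟪gsf ω', S i ω'⟫ | 𝒢 i]) ω /
        (μ[fun ω' => ‖S i ω'‖ ^ 2 | 𝒢 i]) ω) :
    ∀ b : Fin n → Ω → ℝ, (∀ i, Measurable[𝒢 i] (b i)) →
      (∀ i, Integrable (fun ω => (b i ω) ^ 2 * ‖S i ω‖ ^ 2) μ) →
      (∫ ω, ‖∑ i, (F i ω - βstar i ω) • S i ω‖ ^ 2 ∂μ) ≤
        ∫ ω, ‖∑ i, (F i ω - b i ω) • S i ω‖ ^ 2 ∂μ := by
  intro b hb hbS
  obtain rfl : βstar = fun i => optimalBaseline μ (𝒢 i) gsf (S i) := funext hβstar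
  have hFS (i : Fin n) : MemLp (fun ω => F i ω • S i ω) 2 μ :=
    (memLp_two_smul_iff (hFmeas i).aestronglyMeasurable (hS i).1).2 (hF i)
  have hg : MemLp gsf 2 μ := hgsf ▸ memLp_finsetSum _ fun i _ => hFS i
  have hβS (i : Fin n) := memLp_optimalBaseline_smul (h𝒢 i) hg (hS i) (hpos i)
  have hbS' (i : Fin n) : MemLp (fun ω => b i ω • S i ω) 2 μ :=
    (memLp_two_smul_iff ((hb i).mono (h𝒢 i) le_rfl).aestronglyMeasurable (hS i).1).2 (hbS i)
  have hδS (i : Fin n) : MemLp (fun ω => (optimalBaseline μ (𝒢 i) gsf (S i) ω - b i ω) • S i ω)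
      2 μ :=
    ((hβS i).sub (hbS' i)).ae_eq (ae_of_all _ fun ω => (sub_smul _ _ _).symm)
  have hsplit (c : Fin n → Ω → ℝ) (ω : Ω) : ∑ i, (F i ω - c i ω) • S i ω =
      (gsf ω - ∑ i, optimalBaseline μ (𝒢 i) gsf (S i) ω • S i ω) +
        ∑ i, (optimalBaseline μ (𝒢 i) gsf (S i) ω - c i ω) • S i ω := by
    simp only [hgsf, sub_smul, Finset.sum_sub_distrib]
    abel
  simp only [hsplit b, hsplit fun i => optimalBaseline μ (𝒢 i) gsf (S i), sub_self, zero_smul,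
    Finset.sum_const_zero, add_zero]
  exact integral_norm_sq_le_integral_norm_add_sq (hg.sub (memLp_finsetSum _ fun i _ => hβS i))
    (memLp_finsetSum _ fun i _ => hδS i)
    (integral_inner_sub_sum_optimalBaseline_smul_eq_zero h𝒢 hS hg horth hpos
      (fun i => measurable_optimalBaseline.sub (hb i)) hδS)
end

section
/- Consider a finite-horizon Markov decision process with finite state space 𝒮, finite action space 𝒜, horizon T ≥ 1, deterministic initial state s₁ ∈ 𝒮, transition kernel p : 𝒮 × 𝒜 → 𝒮 → ℝ (with p(s,a) a probability mass function on 𝒮 for every (s,a)), deterministic reward r : 𝒮 × 𝒜 → ℝ, and a policy π : ℝ^k → 𝒮 → 𝒜 → ℝ such that for each s ∈ 𝒮: π(θ)(s) is a probability mass function on 𝒜, π(θ)(s)(a) > 0, and θ ↦ π(θ)(s)(a) is differentiable at θ₀ for all a. Let J(θ) := E_θ[∑_{t=1}^T r(s_t, a_t)] denote the expected total reward, where the expectation is the finite sum over all trajectories (a₁, s₂, a₂, …, s_T, a_T) weighted by ∏_t π(θ)(s_t)(a_t) p(s_t, a_t)(s_{t+1}). Then ∇J(θ₀) = E_{θ₀}[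 ∑_{j=1}^T ( ∑_{t=j}^T r(s_t, a_t) ) · ∇_θ log π(θ)(s_j)(a_j)|_{θ₀} ]. -/
/-!
Induction on the horizon, peeling off the first step of the trajectory. Because trajectory
weights sum to one, the expected reward satisfies the Bellman recursion
`V_{n+1}(s) = ∑ a s', π(s,a) p(s,a,s') (r(s,a) + V_n(s'))`, and the expectation of the reinforce
estimator satisfies the recursion obtained by differentiating it, with `∇π = π ∇log π` for the
first factor. Causality (past rewards times future scores average to zero) is thus never needed
as a separate statement.
-/

open Real Finset

theorem Fin.sum_pi_succ {X M : Type*} [Fintype X] [AddCommMonoid M] {n : ℕ}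
    (g : (Fin (n + 1) → X) → M) :
    ∑ f, g f = ∑ x, ∑ f : Fin n → X, g (Fin.cons x f) := by
  rw [← (Fin.consEquiv fun _ ↦ X).sum_comp, Fintype.sum_prod_type]
  rfl

theorem DifferentiableAt.hasFDerivAt_smul_fderiv_log {E : Type*} [NormedAddCommGroup E]
    [NormedSpace ℝ E] {f : E → ℝ} {x : E} (hf : DifferentiableAt ℝ f x) (hx : f x ≠ 0) :
    HasFDerivAt f (f x • fderiv ℝ (fun y ↦ Real.log (f y)) x) x := by
  rw [(hf.hasFDerivAt.log hx).fderiv, smul_inv_smul₀ hx]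
  exact hf.hasFDerivAt

namespace FiniteMDP

variable {S A M : Type*} [AddCommMonoid M] [Module ℝ M]

section Trajectory

variable {n : ℕ} (q : S → A → ℝ) (p : S → A → S → ℝ) (r : S → A → ℝ) (ψ : S → A → M)

def trajWeight (σ : Fin (n + 1) → S) (α : Fin n → A) : ℝ :=
  ∏ t, q (σ t.castSucc) (α t) * p (σ t.castSucc) (α t) (σ t.succ)

def totalReward (σ : Fin (n + 1) → S) (α : Fin n → A) : ℝ :=
  ∑ t, r (σ t.castSucc) (α t)

def rewardToGo (j : Fin n) (σ : Fin (n + 1) → S) (α : Fin n → A) : ℝ :=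
  ∑ t ∈ Ici j, r (σ t.castSucc) (α t)

def reinforce (σ : Fin (n + 1) → S) (α : Fin n → A) : M :=
  ∑ j, rewardToGo r j σ α • ψ (σ j.castSucc) (α j)

variable (s : S) (a : A) (σ : Fin (n + 1) → S) (α : Fin n → A)

theorem trajWeight_cons :
    trajWeight q p (Fin.cons s σ) (Fin.cons a α) = q s a * p s a (σ 0) * trajWeight q p σ α := by
  simp [trajWeight, Fin.prod_univ_succ]

theorem totalReward_cons :
    totalReward r (Fin.cons s σ) (Fin.cons a α) = r s a + totalReward r σ α := by
  simp [totalReward, Fin.sum_univ_succ]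

theorem rewardToGo_cons_zero :
    rewardToGo r 0 (Fin.cons s σ) (Fin.cons a α) = r s a + totalReward r σ α := by
  rw [← totalReward_cons]
  simp [rewardToGo, totalReward]

theorem rewardToGo_cons_succ (j : Fin n) :
    rewardToGo r j.succ (Fin.cons s σ) (Fin.cons a α) = rewardToGo r j σ α := by
  simp [rewardToGo, Fin.sum_Ici_succ]

theorem reinforce_cons :
    reinforce r ψ (Fin.cons s σ) (Fin.cons a α) =
      (r s a + totalReward r σ α) • ψ s a + reinforce r ψ σ α := by
  simp [reinforce, Fin.sum_univ_succ, rewardToGo_cons_zero, rewardToGo_cons_succ]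

end Trajectory

variable [Fintype S] [Fintype A] [DecidableEq S]

section Expectation

variable (q : S → A → ℝ) (p : S → A → S → ℝ)

def trajExpect {n : ℕ} (s : S) (F : (Fin (n + 1) → S) → (Fin n → A) → M) : M :=
  ∑ σ, ∑ α, ((if σ 0 = s then 1 else 0) * trajWeight q p σ α) • F σ α

theorem trajExpect_add {n : ℕ} (s : S) (F G : (Fin (n + 1) → S) → (Fin n → A) → M) :
    trajExpect q p s (F + G) = trajExpect q p s F + trajExpect q p s G := by
  simp only [trajExpect, Pi.add_apply, smul_add, sum_add_distrib]

theorem trajExpect_smul_const {n : ℕ} (s : S) (c : (Fin (n + 1) → S) → (Fin n → A) → ℝ)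
    (v : M) :
    trajExpect q p s (fun σ α ↦ c σ α • v) = trajExpect q p s c • v := by
  simp only [trajExpect, smul_smul, sum_smul, smul_eq_mul]

theorem trajExpect_succ {n : ℕ} (s : S) (F : (Fin (n + 2) → S) → (Fin (n + 1) → A) → M) :
    trajExpect q p s F = ∑ a, ∑ s', (q s a * p s a s') •
      trajExpect q p s' fun σ α ↦ F (Fin.cons s σ) (Fin.cons a α) := by
  rw [trajExpect, Fin.sum_pi_succ, sum_eq_single s (fun x _ hx ↦ by simp [hx]) (by simp)]
  simp only [Fin.cons_zero, Fin.sum_pi_succ (X := A), trajWeight_cons]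
  rw [sum_comm]
  refine sum_congr rfl fun a _ ↦ ?_
  simp only [trajExpect, smul_sum, smul_smul]
  conv_rhs => rw [sum_comm]
  refine sum_congr rfl fun σ _ ↦ ?_
  conv_rhs => rw [sum_comm]
  refine sum_congr rfl fun α _ ↦ ?_
  rw [sum_eq_single (σ 0) (fun x _ hx ↦ by simp [Ne.symm hx]) (by simp)]
  simp [mul_assoc]

variable {q p} (hq : ∀ s, ∑ a, q s a = 1) (hp : ∀ s a, ∑ s', p s a s' = 1)
include hq hp

theorem trajExpect_const {n : ℕ} (s : S) (c : M) :
    trajExpect q p (n := n) s (fun _ _ ↦ c) = c := by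
  induction n generalizing s with
  | zero => simp [trajExpect, trajWeight, Fin.sum_pi_succ]
  | succ n ih => simp only [trajExpect_succ, ih, ← sum_smul, ← mul_sum, hp, mul_one, hq, one_smul]

theorem trajExpect_const_add {n : ℕ} (s : S) (c : M)
    (F : (Fin (n + 1) → S) → (Fin n → A) → M) :
    trajExpect q p s (fun σ α ↦ c + F σ α) = c + trajExpect q p s F := by
  rw [← trajExpect_const hq hp s c, ← trajExpect_add, trajExpect_const hq hp]
  rfl

variable (r : S → A → ℝ)

theorem trajExpect_totalReward_succ {n : ℕ} (s : S) :
    trajExpect q p s (totalReward r (n := n + 1)) =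
      ∑ a, ∑ s', q s a * p s a s' * (r s a + trajExpect q p s' (totalReward r (n := n))) := by
  simp only [trajExpect_succ, totalReward_cons, trajExpect_const_add hq hp, smul_eq_mul]

theorem trajExpect_reinforce_succ (ψ : S → A → M) {n : ℕ} (s : S) :
    trajExpect q p s (reinforce r ψ (n := n + 1)) =
      ∑ a, ∑ s', (q s a * p s a s') • ((r s a + trajExpect q p s' (totalReward r (n := n))) •
        ψ s a + trajExpect q p s' (reinforce r ψ (n := n))) := by
  have hsplit (a : A) : (fun σ α ↦ reinforce r ψ (Fin.cons s σ) (Fin.cons a α)) =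
      (fun σ α ↦ (r s a + totalReward r σ α) • ψ s a) + reinforce r ψ (n := n) := by
    ext σ α
    exact reinforce_cons r ψ s a σ α
  simp only [trajExpect_succ, hsplit, trajExpect_add, trajExpect_smul_const,
    trajExpect_const_add hq hp]

end Expectation

theorem hasFDerivAt_trajExpect_totalReward {E : Type*} [NormedAddCommGroup E]
    [NormedSpace ℝ E] {pol : E → S → A → ℝ} {p : S → A → S → ℝ}
    (hpol : ∀ θ s, ∑ a, pol θ s a = 1) (hp : ∀ s a, ∑ s', p s a s' = 1) (r : S → A → ℝ)
    {θ₀ : E} {ψ : S → A → StrongDual ℝ E}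
    (hψ : ∀ s a, HasFDerivAt (fun θ ↦ pol θ s a) (pol θ₀ s a • ψ s a) θ₀) (n : ℕ) (s : S) :
    HasFDerivAt (fun θ ↦ trajExpect (pol θ) p s (totalReward r (n := n)))
      (trajExpect (pol θ₀) p s (reinforce r ψ (n := n))) θ₀ := by
  induction n generalizing s with
  | zero =>
    have hR : totalReward r (n := 0) = fun _ _ ↦ 0 := by ext; simp [totalReward]
    have hG : reinforce r ψ (n := 0) = fun _ _ ↦ 0 := by ext; simp [reinforce]
    simp only [hR, hG, trajExpect_const (hpol _) hp]
    exact hasFDerivAt_const 0 θ₀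
  | succ n ih =>
    simp only [trajExpect_totalReward_succ (hpol _) hp, trajExpect_reinforce_succ (hpol θ₀) hp]
    refine HasFDerivAt.fun_sum fun a _ ↦ HasFDerivAt.fun_sum fun s' _ ↦ ?_
    refine (((hψ s a).mul_const (p s a s')).mul ((ih s').const_add (r s a))).congr_fderiv ?_
    module

end FiniteMDP

theorem finite_horizon_policy_gradient_general
    {S A : Type*} [Fintype S] [Fintype A]
    [DecidableEq S] {k : ℕ} (T : ℕ) (s₁ : S)
    (p : S → A → S → ℝ)
    (hp_sum : ∀ s a, ∑ s', p s a s' = 1)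
    (r : S → A → ℝ)
    (pol : EuclideanSpace ℝ (Fin k) → S → A → ℝ) (θ₀ : EuclideanSpace ℝ (Fin k))
    (hpol_pos : ∀ θ s a, 0 < pol θ s a)
    (hpol_sum : ∀ θ s, ∑ a, pol θ s a = 1)
    (hpol_diff : ∀ s a, DifferentiableAt ℝ (fun θ => pol θ s a) θ₀)
    (P : EuclideanSpace ℝ (Fin k) → (Fin (T + 1) → S) → (Fin T → A) → ℝ)
    (hP : ∀ θ σ α, P θ σ α = (if σ 0 = s₁ then (1 : ℝ) else 0) *
      ∏ t : Fin T, (pol θ (σ t.castSucc) (α t) * p (σ t.castSucc) (α t) (σ t.succ)))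
    (J : EuclideanSpace ℝ (Fin k) → ℝ)
    (hJ : ∀ θ, J θ = ∑ σ : Fin (T + 1) → S, ∑ α : Fin T → A,
      P θ σ α * ∑ t : Fin T, r (σ t.castSucc) (α t)) :
    gradient J θ₀ = ∑ σ : Fin (T + 1) → S, ∑ α : Fin T → A,
      P θ₀ σ α • ∑ j : Fin T,
        (∑ t ∈ Finset.Ici j, r (σ t.castSucc) (α t)) •
          gradient (fun θ => log (pol θ (σ j.castSucc) (α j))) θ₀ := by
  have hJ_eq :
      J = fun θ ↦ FiniteMDP.trajExpect (pol θ) p s₁ (FiniteMDP.totalReward r (n := T)) := by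
    ext θ
    simp only [hJ, hP]
    rfl
  have hscore (s : S) (a : A) :=
    (hpol_diff s a).hasFDerivAt_smul_fderiv_log (hpol_pos θ₀ s a).ne'
  rw [gradient, hJ_eq,
    (FiniteMDP.hasFDerivAt_trajExpect_totalReward hpol_sum hp_sum r hscore T s₁).fderiv]
  simp only [FiniteMDP.trajExpect, FiniteMDP.trajWeight, FiniteMDP.reinforce,
    FiniteMDP.rewardToGo, hP, gradient, map_sum, map_smulₛₗ, conj_trivial]

/-- Finite-horizon policy gradient theorem: for a finite MDP with horizon `T`,
deterministic initial state `s₁`, transition kernel `p`, deterministic reward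
`r` and a differentiable positive policy `pol`, the gradient of the expected
total reward `J` equals the expectation over trajectories of the sum over
timesteps of the reward-to-go times the score function.  A trajectory is a
pair `(σ, α)` of a state sequence `σ : Fin (T+1) → S` (with `σ 0` forced to be
`s₁` by the indicator in the trajectory probability `P`) and an action
sequence `α : Fin T → A`. -/
theorem finite_horizon_policy_gradient
    {S A : Type*} [Fintype S] [Fintype A] [Nonempty S] [Nonempty A]
    [DecidableEq S] {k : ℕ} (T : ℕ) (hT : 1 ≤ T) (s₁ : S)
    (p : S → A → S → ℝ)
    (hp_nonneg : ∀ s a s', 0 ≤ p s a s') (hp_sum : ∀ s a, ∑ s', p s a s' = 1)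
    (r : S → A → ℝ)
    (pol : EuclideanSpace ℝ (Fin k) → S → A → ℝ) (θ₀ : EuclideanSpace ℝ (Fin k))
    (hpol_pos : ∀ θ s a, 0 < pol θ s a)
    (hpol_sum : ∀ θ s, ∑ a, pol θ s a = 1)
    (hpol_diff : ∀ s a, DifferentiableAt ℝ (fun θ => pol θ s a) θ₀)
    (P : EuclideanSpace ℝ (Fin k) → (Fin (T + 1) → S) → (Fin T → A) → ℝ)
    (hP : ∀ θ σ α, P θ σ α = (if σ 0 = s₁ then (1 : ℝ) else 0) *
      ∏ t : Fin T, (pol θ (σ t.castSucc) (α t) * p (σ t.castSucc) (α t) (σ t.succ)))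
    (J : EuclideanSpace ℝ (Fin k) → ℝ)
    (hJ : ∀ θ, J θ = ∑ σ : Fin (T + 1) → S, ∑ α : Fin T → A,
      P θ σ α * ∑ t : Fin T, r (σ t.castSucc) (α t)) :
    gradient J θ₀ = ∑ σ : Fin (T + 1) → S, ∑ α : Fin T → A,
      P θ₀ σ α • ∑ j : Fin T,
        (∑ t ∈ Finset.Ici j, r (σ t.castSucc) (α t)) •
          gradient (fun θ => log (pol θ (σ j.castSucc) (α j))) θ₀ :=
  finite_horizon_policy_gradient_general T s₁ p hp_sum r pol θ₀ hpol_pos hpol_sum hpol_diff P hP J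
    hJ
end

section
/- Fix θ₁, θ₂ ∈ ℝ and set p := e^{θ₂}/(e^{θ₁}+e^{θ₂}) (probability of heads) and q := 1 − p (probability of tails). Let the sample space be Ω = {T, H}² with P(ω) = P(ω₁)P(ω₂) where P(H) = p, P(T) = q. Let the score vectors in ℝ² be u(H) := (−q, q) and u(T) := (p, −p) (the gradients of log P(H) and log P(T) with respect to (θ₁, θ₂)). Let the payoff be R(T,T) = 1, R(H,H) = 2, R(H,T) = R(T,H) = 4. For baseline values c, c_T, c_H ∈ ℝ, define the baselined gradient estimator g : Ω → ℝ² by g(ω₁, ω₂) := (R(ω) − c)·u(ω₁) + (R(ω) − c_{ω₁})·u(ω₂). Then there exist c, c_T, c_H ∈ ℝ such that g(ω) = ∑_{ω' ∈ Ω} P(ω') g(ω') for every ω ∈ Ω; that is, the state-dependent optimally-baselined gradient estimator has zero variance. -/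
open Real

/-- Coin-flips example: with a softmax policy over {tails, heads} with logits
`(θ₁, θ₂)`, payoffs $1 for two tails, $2 for two heads and $4 for mixed
outcomes, there exist a constant baseline `c` for the first flip and
state-dependent baselines `c_T, c_H` for the second flip such that the
baselined REINFORCE gradient estimator equals the true expected gradient on
every sample path, i.e. achieves zero variance.  Here `true` encodes heads,
`false` tails, `P` is the flip distribution and `u` the score vectors. -/
theorem coin_flips_zero_variance_baseline
    (θ₁ θ₂ : ℝ) (p q : ℝ)
    (hp : p = exp θ₂ / (exp θ₁ + exp θ₂)) (hq : q = 1 - p)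
    (P : Bool → ℝ) (hP : P true = p ∧ P false = q)
    (u : Bool → ℝ × ℝ) (hu : u true = (-q, q) ∧ u false = (p, -p))
    (R : Bool × Bool → ℝ)
    (hR : R (false, false) = 1 ∧ R (true, true) = 2 ∧
      R (true, false) = 4 ∧ R (false, true) = 4)
    (g : ℝ → ℝ → ℝ → Bool × Bool → ℝ × ℝ)
    (hg : ∀ c cT cH ω, g c cT cH ω =
      (R ω - c) • u ω.1 + (R ω - (if ω.1 then cH else cT)) • u ω.2) :
    ∃ c cT cH : ℝ, ∀ ω : Bool × Bool,
      g c cT cH ω = ∑ ω' : Bool × Bool, (P ω'.1 * P ω'.2) • g c cT cH ω' := by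
  obtain ⟨hPt, hPf⟩ := hP
  obtain ⟨hut, huf⟩ := hu
  obtain ⟨h1, h2, h3, h4⟩ := hR
  refine ⟨4 - 10*p + 10*p^2, 4*q - 2*p, 4*p, ?_⟩
  intro ω
  rw [show (∑ ω' : Bool × Bool, (P ω'.1 * P ω'.2) • g (4 - 10*p + 10*p^2) (4*q - 2*p) (4*p) ω') =
    (P true * P true) • g _ _ _ (true, true) + (P true * P false) • g _ _ _ (true, false)
    + (P false * P true) • g _ _ _ (false, true) + (P false * P false) • g _ _ _ (false, false)
    from by rw [Fintype.sum_prod_type]; simp [Fintype.sum_bool]; ring]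
  rcases ω with ⟨b1, b2⟩
  cases b1 <;> cases b2 <;>
    simp only [hg, h1, h2, h3, h4, hPt, hPf, hut, huf, if_true, if_false,
      Prod.smul_mk, Prod.mk_add_mk, smul_eq_mul, Prod.mk.injEq, reduceIte] <;>
    subst hq <;> norm_num <;> constructor <;> ring
end
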